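/- Let $G = \mathrm{GL}_1(\mathbb{C})$ with $\eta_0(z) = \bar{z}^{-1}$ and $\epsilon = -1$, so $\eta$ acts on $\gamma \in \mathbb{C}[t,t^{-1}]^\times$ by $\eta(\gamma)(t) = \overline{\gamma(-\bar{t}^{-1})}^{-1}$. Then the map $\tau_\eta(\gamma) = \gamma \cdot \eta(\gamma)^{-1}$ surjects onto the anti-fixed set $\{\gamma : \eta(\gamma) = \gamma^{-1}\}$. -/

import Mathlib

/-! Writing `γ = c tᵏ`, the condition `η(γ) = γ⁻¹` forces `k = 0` and `c` real, while
`τ_η(d tᵐ) = |d|² (-1)ᵐ`. Every nonzero real number is of this form. -/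

/-- The group of units `c tᵏ` of `ℂ[t,t⁻¹]`, modelled as pairs `(c, k) ∈ ℂˣ × ℤ`. -/
abbrev LoopUnit' : Type := ℂˣ × Multiplicative ℤ

/-- For `GL₁` with `η₀(z) = conj(z)⁻¹` and `ε = -1`, the twisted conjugation
`η(γ)(t) = conj(γ(-conj(t)⁻¹))⁻¹` sends `c tᵏ` to `conj(c)⁻¹ (-1)ᵏ tᵏ`. -/
noncomputable def etaNegOne : LoopUnit' → LoopUnit' :=
  fun γ => ((Units.map (starRingEnd ℂ).toMonoidHom γ.1)⁻¹ * (-1 : ℂˣ) ^ (Multiplicative.toAdd γ.2),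
    γ.2)

open ComplexConjugate

theorem mul_inv_etaNegOne (δ : LoopUnit') :
    δ * (etaNegOne δ)⁻¹ =
      (δ.1 * Units.map (starRingEnd ℂ).toMonoidHom δ.1 * (-1) ^ Multiplicative.toAdd δ.2, 1) := by
  ext
  · simp [etaNegOne, ← inv_zpow, mul_comm, mul_assoc]
  · simp [etaNegOne]

theorem conj_eq_and_eq_one_of_etaNegOne_eq_inv {γ : LoopUnit'} (h : etaNegOne γ = γ⁻¹) :
    conj (γ.1 : ℂ) = γ.1 ∧ γ.2 = 1 := by
  obtain ⟨hc, hk⟩ := Prod.ext_iff.mp h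
  have hk : γ.2 = 1 := by
    have := congrArg Multiplicative.toAdd hk
    exact toAdd_eq_zero.mp (by simpa [etaNegOne, self_eq_neg] using this)
  refine ⟨?_, hk⟩
  simp only [etaNegOne, hk, toAdd_one, zpow_zero, mul_one, Prod.fst_inv, inv_inj] at hc
  exact congrArg Units.val hc

theorem Complex.exists_mul_conj_mul_neg_one_zpow_eq {z : ℂ} (hz : z ≠ 0) (hreal : conj z = z) :
    ∃ d : ℂˣ, ∃ m : ℤ, (d : ℂ) * conj (d : ℂ) * (-1) ^ m = z := by
  obtain ⟨r, rfl⟩ := Complex.conj_eq_iff_real.mp hreal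
  have hr : r ≠ 0 := by exact_mod_cast hz
  have hd : (√|r| : ℂ) ≠ 0 := by simpa using hr
  refine ⟨Units.mk0 _ hd, if 0 < r then 0 else 1, ?_⟩
  rw [Units.val_mk0, Complex.conj_ofReal, ← Complex.ofReal_mul, Real.mul_self_sqrt (abs_nonneg r)]
  split_ifs with hpos
  · simp [abs_of_pos hpos]
  · simp [abs_of_neg (lt_of_le_of_ne (not_lt.mp hpos) hr)]

/-- For `GL₁(ℂ)` with the compact form `U(1)` and `ε = -1`, the map
`τ_η(γ) = γ ⋅ η(γ)⁻¹` surjects onto the anti-fixed set `{γ : η(γ) = γ⁻¹}`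
(the `n = 1` case of Proposition 3.23 of the paper). -/
theorem gl1_eps_neg_one_tau_surjective :
    ∀ γ : LoopUnit', etaNegOne γ = γ⁻¹ →
      ∃ δ : LoopUnit', δ * (etaNegOne δ)⁻¹ = γ := by
  intro γ h
  obtain ⟨hreal, hk⟩ := conj_eq_and_eq_one_of_etaNegOne_eq_inv h
  obtain ⟨d, m, hd⟩ := Complex.exists_mul_conj_mul_neg_one_zpow_eq γ.1.ne_zero hreal
  refine ⟨(d, Multiplicative.ofAdd m), ?_⟩
  rw [mul_inv_etaNegOne]
  exact Prod.ext (Units.ext (by simpa using hd)) hk.symm
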